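/- Let B be a square substochastic matrix that is block upper triangular with square diagonal blocks B_11, B_22, …, B_rr, each of which is either irreducible or a 1×1 zero matrix (the normal form). Then B is convergent (B^k → 0 as k → ∞) if and only if Ĵ(B_ii) is nonempty for every i ∈ {1, …, r}. -/

import Mathlib

open Matrix Filter Finset

/-- A substochastic matrix: nonnegative entries, row sums at most one. -/
def IsSubstochastic {m n : Type*} [Fintype n] (B : Matrix m n ℝ) : Prop :=
  (∀ i j, 0 ≤ B i j) ∧ ∀ i, ∑ j, B i j ≤ 1

/-- Ĵ(B): the set of rows with row-sum strictly less than one. -/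
def Jhat {m n : Type*} [Fintype n] (B : Matrix m n ℝ) : Set m :=
  {i | ∑ j, B i j < 1}

/-- There is a walk of length `ℓ` (a nonempty sequence of `ℓ` consecutive edges) in the
digraph of `A` (edge `i → j` iff `A i j ≠ 0`) starting at `i` and ending in `S`. -/
def IsWalkTo {V : Type*} (A : Matrix V V ℝ) (i : V) (S : Set V) (ℓ : ℕ) : Prop :=
  1 ≤ ℓ ∧ ∃ w : ℕ → V, w 0 = i ∧ (∀ k < ℓ, A (w k) (w (k + 1)) ≠ 0) ∧ w ℓ ∈ S

/-- The index of contraction `ĉon B ∈ ℕ∞`: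
`max(0, sup_{i ∉ Ĵ(B)} inf_{p ∈ P̂ᵢ(B)} |p|)` with `inf ∅ = ∞`, `sup ∅ = -∞`
(in `ℕ∞` the empty supremum is `0`, matching `max(0, -∞) = 0`). -/
noncomputable def conHat {V : Type*} [Fintype V] (B : Matrix V V ℝ) : ℕ∞ :=
  ⨆ i ∈ (Jhat B)ᶜ, ⨅ ℓ ∈ {ℓ : ℕ | IsWalkTo B i (Jhat B) ℓ}, (ℓ : ℕ∞)

/-- The maximum absolute row-sum norm `‖·‖_∞`. -/
noncomputable def rowSumNorm {m n : Type*} [Fintype n] (B : Matrix m n ℝ) : ℝ :=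
  ⨆ i, ∑ j, |B i j|

/-- `B` is convergent: `Bᵏ → 0` as `k → ∞`. -/
def IsConvergent {V : Type*} [Fintype V] [DecidableEq V] (B : Matrix V V ℝ) : Prop :=
  Tendsto (fun k : ℕ => B ^ k) atTop (nhds 0)

/-- `B` is irreducible: its digraph is strongly connected, i.e. for every pair of
vertices `i, j` there is a walk from `i` to `j`. -/
def IsIrreducibleMat {V : Type*} (B : Matrix V V ℝ) : Prop :=
  ∀ i j : V, ∃ ℓ : ℕ, 1 ≤ ℓ ∧
    ∃ w : ℕ → V, w 0 = i ∧ w ℓ = j ∧ ∀ k < ℓ, B (w k) (w (k + 1)) ≠ 0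

/-- The `i`-th diagonal block of a matrix indexed by `Σ i, Fin (nsz i)`. -/
def diagBlock {r : ℕ} {nsz : Fin r → ℕ}
    (M : Matrix (Σ i, Fin (nsz i)) (Σ i, Fin (nsz i)) ℝ) (i : Fin r) :
    Matrix (Fin (nsz i)) (Fin (nsz i)) ℝ :=
  Matrix.of fun a b => M ⟨i, a⟩ ⟨i, b⟩

/-!
Row `i` of `Mᵏ` sums to the mass that, started at `i`, is still in the system after `k` steps;
mass escapes exactly at the rows of `Ĵ(M)`, so it leaks from every row that reaches `Ĵ(M)` in the
digraph of `M`. Once every row leaks, some power has `‖M ^ N‖_∞ < 1` and `Mᵏ → 0`. In the normal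
form, a deficient row of block `i` is deficient in `M` or has an edge into a later block, and
irreducibility carries its leak to the whole block; downward induction over the blocks makes every
row leak. Conversely, a block with `Ĵ(B_ii) = ∅` never loses the mass it carries, so `Mᵏ ↛ 0`.
-/

open scoped Topology

theorem norm_mul_pow_le {R : Type*} [SeminormedRing R] (a b : R) (q : ℕ) :
    ‖a * b ^ q‖ ≤ ‖a‖ * ‖b‖ ^ q := by
  induction q with
  | zero => simp
  | succ q ih =>
    calc ‖a * b ^ (q + 1)‖ = ‖a * b ^ q * b‖ := by rw [pow_succ, mul_assoc]
      _ ≤ ‖a * b ^ q‖ * ‖b‖ := norm_mul_le _ _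
      _ ≤ ‖a‖ * ‖b‖ ^ q * ‖b‖ := by gcongr
      _ = ‖a‖ * ‖b‖ ^ (q + 1) := by rw [pow_succ, mul_assoc]

theorem tendsto_pow_atTop_nhds_zero_of_norm_pow_lt_one {R : Type*} [SeminormedRing R] {x : R}
    {N : ℕ} (hN : N ≠ 0) (h : ‖x ^ N‖ < 1) : Tendsto (fun n => x ^ n) atTop (𝓝 0) := by
  set C := ∑ s ∈ range N, ‖x ^ s‖
  have hbound : ∀ n, ‖x ^ n‖ ≤ C * ‖x ^ N‖ ^ (n / N) := fun n =>
    calc ‖x ^ n‖ = ‖x ^ (n % N) * (x ^ N) ^ (n / N)‖ := by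
          rw [← pow_mul, ← pow_add, Nat.mod_add_div]
      _ ≤ ‖x ^ (n % N)‖ * ‖x ^ N‖ ^ (n / N) := norm_mul_pow_le _ _ _
      _ ≤ C * ‖x ^ N‖ ^ (n / N) := by
          gcongr
          exact single_le_sum (fun s _ => norm_nonneg (x ^ s))
            (mem_range.2 (Nat.mod_lt n (Nat.pos_of_ne_zero hN)))
  have hC : Tendsto (fun n => C * ‖x ^ N‖ ^ (n / N)) atTop (𝓝 0) := by
    simpa using ((tendsto_pow_atTop_nhds_zero_of_lt_one (norm_nonneg _) h).comp
      (Nat.tendsto_div_const_atTop hN)).const_mul C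
  exact squeeze_zero_norm hbound hC

namespace Matrix

variable {l m n : Type*} [Fintype m] [Fintype n]

theorem sum_mul_apply_eq (A : Matrix l m ℝ) (B : Matrix m n ℝ) (i : l) :
    ∑ j, (A * B) i j = ∑ k, A i k * ∑ j, B k j := by
  simp only [mul_apply, mul_sum]
  exact sum_comm

end Matrix

namespace IsSubstochastic

variable {l m n : Type*} [Fintype m] [Fintype n]

theorem sum_mul_apply_le {A : Matrix l m ℝ} {B : Matrix m n ℝ} (hA : ∀ i k, 0 ≤ A i k)
    (hB : IsSubstochastic B) (i : l) : ∑ j, (A * B) i j ≤ ∑ k, A i k := by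
  rw [sum_mul_apply_eq]
  exact sum_le_sum fun k _ => mul_le_of_le_one_right (hA i k) (hB.2 k)

theorem sum_mul_apply_lt {A : Matrix l m ℝ} {B : Matrix m n ℝ} (hA : ∀ i k, 0 ≤ A i k)
    (hB : IsSubstochastic B) {i : l} {k : m} (hik : A i k ≠ 0) (hk : ∑ j, B k j < 1) :
    ∑ j, (A * B) i j < ∑ k, A i k := by
  rw [sum_mul_apply_eq]
  refine sum_lt_sum (fun k _ => mul_le_of_le_one_right (hA i k) (hB.2 k)) ⟨k, mem_univ k, ?_⟩
  exact mul_lt_of_lt_one_right ((hA i k).lt_of_ne' hik) hk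

theorem mul {A : Matrix l m ℝ} {B : Matrix m n ℝ} (hA : IsSubstochastic A)
    (hB : IsSubstochastic B) : IsSubstochastic (A * B) :=
  ⟨fun _ _ => sum_nonneg fun k _ => mul_nonneg (hA.1 _ k) (hB.1 k _),
    fun i => (sum_mul_apply_le hA.1 hB i).trans (hA.2 i)⟩

variable {V : Type*} [Fintype V] [DecidableEq V] {M : Matrix V V ℝ}

theorem one : IsSubstochastic (1 : Matrix V V ℝ) :=
  ⟨fun i j => by by_cases h : i = j <;> simp [one_apply, h], fun i => by simp [one_apply]⟩

theorem pow (hM : IsSubstochastic M) (k : ℕ) : IsSubstochastic (M ^ k) := by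
  induction k with
  | zero => simpa using one
  | succ k ih => simpa [pow_succ] using ih.mul hM

theorem antitone_sum_pow_apply (hM : IsSubstochastic M) (i : V) :
    Antitone fun k => ∑ j, (M ^ k) i j :=
  antitone_nat_of_succ_le fun k => by
    simpa [pow_succ] using sum_mul_apply_le (hM.pow k).1 hM i

end IsSubstochastic

section Leaks

variable {V : Type*} [Fintype V] [DecidableEq V] {M : Matrix V V ℝ}

def Leaks (M : Matrix V V ℝ) (i : V) : Prop :=
  ∃ k, ∑ j, (M ^ k) i j < 1

theorem leaks_of_mem_jhat {i : V} (h : i ∈ Jhat M) : Leaks M i :=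
  ⟨1, by simpa [Jhat] using h⟩

theorem Leaks.of_ne_zero (hM : IsSubstochastic M) {i j : V} (hij : M i j ≠ 0)
    (hj : Leaks M j) : Leaks M i := by
  obtain ⟨k, hk⟩ := hj
  refine ⟨k + 1, ?_⟩
  rw [pow_succ']
  exact (IsSubstochastic.sum_mul_apply_lt hM.1 (hM.pow k) hij hk).trans_le (hM.2 i)

theorem Leaks.of_walk (hM : IsSubstochastic M) {w : ℕ → V} {ℓ : ℕ}
    (hw : ∀ k < ℓ, M (w k) (w (k + 1)) ≠ 0) (h : Leaks M (w ℓ)) : Leaks M (w 0) := by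
  induction ℓ with
  | zero => exact h
  | succ ℓ ih => exact ih (fun k hk => hw k (by omega)) (h.of_ne_zero hM (hw ℓ (by omega)))

theorem leaks_of_sum_lt_one (hM : IsSubstochastic M) {i : V} (S : Finset V)
    (hS : ∑ j ∈ S, M i j < 1) (hout : ∀ j ∉ S, M i j ≠ 0 → Leaks M j) : Leaks M i := by
  by_cases h : ∃ j ∉ S, M i j ≠ 0
  · obtain ⟨j, hjS, hij⟩ := h
    exact (hout j hjS hij).of_ne_zero hM hij
  · push Not at h
    refine leaks_of_mem_jhat ?_
    change ∑ j, M i j < 1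
    rwa [← sum_subset (subset_univ S) fun j _ hj => h j hj]

theorem IsSubstochastic.exists_forall_sum_pow_lt_one (hM : IsSubstochastic M)
    (h : ∀ i, Leaks M i) : ∃ N ≠ 0, ∀ i, ∑ j, (M ^ N) i j < 1 := by
  choose k hk using h
  refine ⟨univ.sup k + 1, by omega, fun i => ?_⟩
  exact (hM.antitone_sum_pow_apply i ((le_sup (mem_univ i)).trans (Nat.le_succ _))).trans_lt
    (hk i)

theorem IsSubstochastic.isConvergent_of_forall_leaks (hM : IsSubstochastic M)
    (h : ∀ i, Leaks M i) : IsConvergent M := by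
  let _ : NormedRing (Matrix V V ℝ) := Matrix.linftyOpNormedRing
  obtain ⟨N, hN, hlt⟩ := hM.exists_forall_sum_pow_lt_one h
  refine tendsto_pow_atTop_nhds_zero_of_norm_pow_lt_one hN ?_
  -- `M ^ N` is entrywise nonnegative, so its `‖·‖_∞` is its largest row sum.
  rw [linfty_opNorm_def, NNReal.coe_lt_one, Finset.sup_lt_iff zero_lt_one]
  intro i _
  rw [← NNReal.coe_lt_one, NNReal.coe_sum]
  simpa [abs_of_nonneg ((hM.pow N).1 i _)] using hlt i

theorem IsSubstochastic.not_isConvergent_of_closed (hM : IsSubstochastic M) {S : Finset V}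
    (hne : S.Nonempty) (hS : ∀ i ∈ S, 1 ≤ ∑ j ∈ S, M i j) : ¬ IsConvergent M := by
  have hmass : ∀ k, ∀ i ∈ S, 1 ≤ ∑ j ∈ S, (M ^ k) i j := by
    intro k
    induction k with
    | zero => intro i hi; simp [one_apply, hi]
    | succ k ih =>
      intro i hi
      calc 1 ≤ ∑ l ∈ S, M i l := hS i hi
        _ ≤ ∑ l ∈ S, M i l * ∑ j ∈ S, (M ^ k) l j :=
          sum_le_sum fun l hl => le_mul_of_one_le_right (hM.1 i l) (ih l hl)
        _ ≤ ∑ l, M i l * ∑ j ∈ S, (M ^ k) l j :=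
          sum_le_sum_of_subset_of_nonneg (subset_univ S) fun l _ _ =>
            mul_nonneg (hM.1 i l) (sum_nonneg fun j _ => (hM.pow k).1 l j)
        _ = ∑ j ∈ S, (M ^ (k + 1)) i j := by
          simp only [pow_succ', mul_apply, mul_sum]
          exact sum_comm
  intro hconv
  obtain ⟨i, hi⟩ := hne
  have hlim : Tendsto (fun k => ∑ j ∈ S, (M ^ k) i j) atTop (𝓝 0) := by
    simpa using tendsto_finsetSum S fun j _ => tendsto_pi_nhds.1 (tendsto_pi_nhds.1 hconv i) j
  have := ge_of_tendsto' hlim fun k => hmass k i hi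
  norm_num at this

end Leaks

section BlockTriangular

variable {r : ℕ} {nsz : Fin r → ℕ} {M : Matrix (Σ i, Fin (nsz i)) (Σ i, Fin (nsz i)) ℝ}

theorem mem_jhat_diagBlock_iff {i : Fin r} {a : Fin (nsz i)} :
    a ∈ Jhat (diagBlock M i) ↔
      ∑ b ∈ univ.map (Function.Embedding.sigmaMk i), M ⟨i, a⟩ b < 1 := by
  simp [Jhat, diagBlock, sum_map]

theorem Leaks.of_diagBlock (hM : IsSubstochastic M) {i : Fin r}
    (hblock : IsIrreducibleMat (diagBlock M i) ∨ nsz i = 1) (a : Fin (nsz i)) {a₀ : Fin (nsz i)}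
    (h : Leaks M ⟨i, a₀⟩) : Leaks M ⟨i, a⟩ := by
  rcases hblock with hirr | hone
  · obtain ⟨ℓ, -, w, rfl, rfl, hw⟩ := hirr a a₀
    exact Leaks.of_walk (w := fun t => ⟨i, w t⟩) hM hw h
  · have : Subsingleton (Fin (nsz i)) := by rw [hone]; infer_instance
    rwa [Subsingleton.elim a a₀]

theorem leaks_of_blockTriangular (hM : IsSubstochastic M)
    (htri : ∀ a b : Σ i, Fin (nsz i), b.1 < a.1 → M a b = 0)
    (hblocks : ∀ i, IsIrreducibleMat (diagBlock M i) ∨ nsz i = 1)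
    (hJ : ∀ i, (Jhat (diagBlock M i)).Nonempty) (a : Σ i, Fin (nsz i)) : Leaks M a := by
  obtain ⟨i, a⟩ := a
  induction i using WellFoundedGT.induction with
  | _ i ih =>
  obtain ⟨a₀, ha₀⟩ := hJ i
  refine Leaks.of_diagBlock hM (hblocks i) a
    (leaks_of_sum_lt_one hM _ (mem_jhat_diagBlock_iff.1 ha₀) ?_)
  rintro ⟨c, x⟩ hc hne
  have hci : c ≠ i := fun h => hc (by subst h; simp)
  exact ih c ((not_lt.1 fun h => hne (htri _ _ h)).lt_of_ne' hci) x

end BlockTriangular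

theorem stmt5 {r : ℕ} (nsz : Fin (r + 1) → ℕ) (hnsz : ∀ i, 0 < nsz i)
    (M : Matrix (Σ i, Fin (nsz i)) (Σ i, Fin (nsz i)) ℝ)
    (hM : IsSubstochastic M)
    (htri : ∀ a b : Σ i, Fin (nsz i), b.1 < a.1 → M a b = 0)
    (hblocks : ∀ i, IsIrreducibleMat (diagBlock M i) ∨
      (nsz i = 1 ∧ diagBlock M i = 0)) :
    IsConvergent M ↔ ∀ i, (Jhat (diagBlock M i)).Nonempty := by
  refine ⟨fun hconv i => ?_, fun hJ => hM.isConvergent_of_forall_leaks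
    (leaks_of_blockTriangular hM htri (fun i => (hblocks i).imp_right And.left) hJ)⟩
  by_contra hempty
  refine hM.not_isConvergent_of_closed (S := univ.map (Function.Embedding.sigmaMk i))
    ⟨⟨i, ⟨0, hnsz i⟩⟩, by simp⟩ (fun b hb => ?_) hconv
  obtain ⟨a, -, rfl⟩ := mem_map.1 hb
  exact not_lt.1 fun h => hempty ⟨a, mem_jhat_diagBlock_iff.2 h⟩
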